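/- Define x(t) = x₁t + t³u(t), y(t) = t²v(t) with u, v real analytic on [0,ε), and A₁(t) = t/2 + a₃t³ + O(t⁵), B₁(t) = b₀ + O(t⁴), b₀ > 0. If (x,y) solves x' = F(t)x + y² − x², y' = G(t)y on (0,ε) with F(t) = −A₁'/A₁ + 1/A₁ − A₁/B₁² and G(t) = −B₁'/B₁ − 2/A₁ + 2x, then u(0) = −x₁²/2 − x₁(4a₃ + 1/(4b₀²)) and v(0) = 0. -/

import Mathlib

open Real Filter Topology Asymptotics

/-!
Both initial values come from l'Hôpital's rule at `t = 0⁺` against a power of `t`. For `v`, the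
function `B₁ y = B₁ t² v` satisfies `(B₁ y)' = (2x − 2/A₁) B₁ y ≈ −4 B₁ y / t`, which forces
`2 b₀ v(0) = −4 b₀ v(0)`. For `u`, the combination `A₁ x − x₁ t²/2 = (u(0)/2 + a₃ x₁) t⁴ + o(t⁴)`
has derivative `t³ u − A₁² x / B₁² + A₁ (y² − x²)` (multiplying by `A₁` cancels the singular
terms of `F`), whose leading coefficient `u(0) − x₁/(4b₀²) − x₁²/2` must equal
`4 (u(0)/2 + a₃ x₁)`.
-/

theorem tendsto_pow_nhdsGT_zero {n : ℕ} (hn : n ≠ 0) :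
    Tendsto (fun t : ℝ => t ^ n) (𝓝[>] 0) (𝓝 0) :=
  ((continuous_pow n).tendsto' 0 0 (zero_pow hn)).mono_left nhdsWithin_le_nhds

theorem natCast_mul_eq_of_tendsto_div_pow {f f' : ℝ → ℝ} {a b : ℝ} {n : ℕ} (hn : n ≠ 0)
    (hf : ∀ᶠ t in 𝓝[>] 0, HasDerivAt f (f' t) t)
    (ha : Tendsto (fun t => f t / t ^ n) (𝓝[>] 0) (𝓝 a))
    (hb : Tendsto (fun t => f' t / t ^ (n - 1)) (𝓝[>] 0) (𝓝 b)) :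
    n * a = b := by
  have hpos : ∀ᶠ t in 𝓝[>] (0 : ℝ), 0 < t := self_mem_nhdsWithin
  have hn' : (n : ℝ) ≠ 0 := Nat.cast_ne_zero.mpr hn
  have hf0 : Tendsto f (𝓝[>] 0) (𝓝 0) := by
    have := ha.mul (tendsto_pow_nhdsGT_zero hn)
    rw [mul_zero] at this
    refine this.congr' ?_
    filter_upwards [hpos] with t ht
    field_simp
  have hb' : Tendsto (fun t => f' t / (n * t ^ (n - 1))) (𝓝[>] 0) (𝓝 (b / n)) := by
    refine (hb.div_const (n : ℝ)).congr' ?_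
    filter_upwards with t
    ring
  have hab : a = b / n :=
    tendsto_nhds_unique ha <| HasDerivAt.lhopital_zero_nhdsGT hf
      (Eventually.of_forall fun t => hasDerivAt_pow n t)
      (by filter_upwards [hpos] with t ht; positivity) hf0 (tendsto_pow_nhdsGT_zero hn) hb'
  rw [hab]
  field_simp

theorem tendsto_div_pow_nhdsGT_zero_of_isBigO {f : ℝ → ℝ} {m n : ℕ} (hmn : m < n)
    (hf : f =O[𝓝[>] 0] fun t => t ^ n) :
    Tendsto (fun t => f t / t ^ m) (𝓝[>] 0) (𝓝 0) :=
  (hf.trans_isLittleO ((isLittleO_pow_pow hmn).mono nhdsWithin_le_nhds)).tendsto_div_nhds_zero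

theorem tendsto_div_id_of_isBigO_sub {A : ℝ → ℝ} {a₃ : ℝ}
    (hA : (fun t => A t - (t / 2 + a₃ * t ^ 3)) =O[𝓝[>] (0 : ℝ)] fun t => t ^ 5) :
    Tendsto (fun t => A t / t) (𝓝[>] 0) (𝓝 (1 / 2)) := by
  have hq := tendsto_div_pow_nhdsGT_zero_of_isBigO (m := 1) (by norm_num) hA
  have h := hq.add (tendsto_const_nhds (x := (1 : ℝ) / 2) |>.add
    ((tendsto_pow_nhdsGT_zero two_ne_zero).const_mul a₃))
  rw [zero_add, mul_zero, add_zero] at h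
  refine h.congr' ?_
  filter_upwards [self_mem_nhdsWithin] with t (ht : 0 < t)
  field_simp
  ring

theorem eventually_ne_zero_of_tendsto_div_id {A : ℝ → ℝ} {c : ℝ} (hc : c ≠ 0)
    (hA : Tendsto (fun t => A t / t) (𝓝[>] 0) (𝓝 c)) :
    ∀ᶠ t in 𝓝[>] 0, A t ≠ 0 :=
  (hA.eventually_ne hc).mono fun t ht h => ht (by rw [h, zero_div])

section InstantonSystem

variable {A B x y u v : ℝ → ℝ} {a₃ b₀ x₁ : ℝ}

theorem v_zero_eq_zero_of_hasDerivAt (hb₀ : b₀ ≠ 0) (hB : Differentiable ℝ B)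
    (hA : Tendsto (fun t => A t / t) (𝓝[>] 0) (𝓝 (1 / 2)))
    (hB0 : Tendsto B (𝓝[>] 0) (𝓝 b₀)) (hx : Tendsto x (𝓝[>] 0) (𝓝 0))
    (hv : Tendsto v (𝓝[>] 0) (𝓝 (v 0))) (hyv : ∀ t, y t = t ^ 2 * v t)
    (hy : ∀ᶠ t in 𝓝[>] 0,
      HasDerivAt y ((-deriv B t / B t - 2 / A t + 2 * x t) * y t) t) :
    v 0 = 0 := by
  have hpos : ∀ᶠ t in 𝓝[>] (0 : ℝ), 0 < t := self_mem_nhdsWithin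
  have hid : Tendsto (fun t : ℝ => t) (𝓝[>] 0) (𝓝 0) := tendsto_id.mono_left nhdsWithin_le_nhds
  have hderiv : ∀ᶠ t in 𝓝[>] 0,
      HasDerivAt (fun t => B t * y t) (B t * v t * (t ^ 2 * (2 * x t - 2 / A t))) t := by
    filter_upwards [hy, hB0.eventually_ne hb₀] with t hyt hBt
    refine ((hB t).hasDerivAt.mul hyt).congr_deriv ?_
    rw [hyv]
    field_simp
    ring
  have hlim : Tendsto (fun t => B t * y t / t ^ 2) (𝓝[>] 0) (𝓝 (b₀ * v 0)) := by
    refine (hB0.mul hv).congr' ?_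
    filter_upwards [hpos] with t ht
    rw [hyv]
    field_simp
  have hlim' : Tendsto (fun t => B t * v t * (t ^ 2 * (2 * x t - 2 / A t)) / t ^ (2 - 1))
      (𝓝[>] 0) (𝓝 (b₀ * v 0 * (2 * 0 * 0 - 2 * (1 / 2)⁻¹))) := by
    refine ((hB0.mul hv).mul (((hx.const_mul 2).mul hid).sub
      ((hA.inv₀ (by norm_num)).const_mul 2))).congr' ?_
    filter_upwards [hpos] with t ht
    field_simp
    ring
  have key := natCast_mul_eq_of_tendsto_div_pow two_ne_zero hderiv hlim hlim'
  have : b₀ * v 0 = 0 := by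
    norm_num at key
    linarith
  exact (mul_eq_zero.mp this).resolve_left hb₀

theorem u_zero_eq_of_hasDerivAt (hb₀ : b₀ ≠ 0) (hA : Differentiable ℝ A)
    (hAasym : (fun t => A t - (t / 2 + a₃ * t ^ 3)) =O[𝓝[>] (0 : ℝ)] fun t => t ^ 5)
    (hB0 : Tendsto B (𝓝[>] 0) (𝓝 b₀))
    (hu : Tendsto u (𝓝[>] 0) (𝓝 (u 0))) (hv : Tendsto v (𝓝[>] 0) (𝓝 (v 0)))
    (hxu : ∀ t, x t = x₁ * t + t ^ 3 * u t)
    (hx : ∀ᶠ t in 𝓝[>] 0, HasDerivAt x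
      ((-deriv A t / A t + 1 / A t - A t / B t ^ 2) * x t + (t ^ 2 * v t) ^ 2 - x t ^ 2) t) :
    u 0 = -x₁ ^ 2 / 2 - x₁ * (4 * a₃ + 1 / (4 * b₀ ^ 2)) := by
  have hpos : ∀ᶠ t in 𝓝[>] (0 : ℝ), 0 < t := self_mem_nhdsWithin
  have hsq := tendsto_pow_nhdsGT_zero two_ne_zero
  have hq := tendsto_div_pow_nhdsGT_zero_of_isBigO (m := 3) (by norm_num) hAasym
  have hA1 := tendsto_div_id_of_isBigO_sub hAasym
  have hxq : Tendsto (fun t => x₁ + t ^ 2 * u t) (𝓝[>] 0) (𝓝 (x₁ + 0 * u 0)) :=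
    tendsto_const_nhds.add (hsq.mul hu)
  have hderiv : ∀ᶠ t in 𝓝[>] 0, HasDerivAt (fun t => A t * x t - x₁ / 2 * t ^ 2)
      (t ^ 3 * u t - A t ^ 2 * x t / B t ^ 2 + A t * ((t ^ 2 * v t) ^ 2 - x t ^ 2)) t := by
    filter_upwards [hx, eventually_ne_zero_of_tendsto_div_id (by norm_num) hA1,
      hB0.eventually_ne hb₀] with t hxt hAt hBt
    refine (((hA t).hasDerivAt.mul hxt).sub
      ((hasDerivAt_pow 2 t).const_mul (x₁ / 2))).congr_deriv ?_
    rw [hxu]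
    field_simp
    ring
  have hlim : Tendsto (fun t => (A t * x t - x₁ / 2 * t ^ 2) / t ^ 4) (𝓝[>] 0)
      (𝓝 (0 * (x₁ + 0 * u 0) + u 0 / 2 + a₃ * x₁ + a₃ * (0 * u 0))) := by
    refine ((((hq.mul hxq).add (hu.div_const 2)).add tendsto_const_nhds).add
      ((hsq.mul hu).const_mul a₃)).congr' ?_
    filter_upwards [hpos] with t ht
    rw [hxu]
    field_simp
    ring
  have hlim' : Tendsto
      (fun t => (t ^ 3 * u t - A t ^ 2 * x t / B t ^ 2 + A t * ((t ^ 2 * v t) ^ 2 - x t ^ 2))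
        / t ^ (4 - 1)) (𝓝[>] 0)
      (𝓝 (u 0 - (1 / 2) ^ 2 * (x₁ + 0 * u 0) / b₀ ^ 2
        + 1 / 2 * (0 * v 0 ^ 2 - (x₁ + 0 * u 0) ^ 2))) := by
    refine ((hu.sub (((hA1.pow 2).mul hxq).div (hB0.pow 2) (pow_ne_zero 2 hb₀))).add
      (hA1.mul ((hsq.mul (hv.pow 2)).sub (hxq.pow 2)))).congr' ?_
    filter_upwards [hpos] with t ht
    rw [Pi.div_apply, hxu]
    field_simp
    ring
  have key := natCast_mul_eq_of_tendsto_div_pow four_ne_zero hderiv hlim hlim'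
  norm_num at key
  field_simp at key ⊢
  linarith

end InstantonSystem

/-- Singular initial conditions on the trivial bundle `P₁`: if `x t = x₁·t + t³·u t`,
`y t = t²·v t` (with `u, v` real analytic on `[0, ε)`) solve the `SU(2)³`-invariant
instanton system, then `u 0 = −x₁²/2 − x₁(4a₃ + 1/(4b₀²))` and `v 0 = 0`. -/
theorem stmt16 (A₁ B₁ u v : ℝ → ℝ) (a₃ b₀ x₁ ε : ℝ) (hb₀ : 0 < b₀) (hε : 0 < ε)
    (hA : ContDiff ℝ ⊤ A₁) (hB : ContDiff ℝ ⊤ B₁)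
    (hAasym : (fun t => A₁ t - (t/2 + a₃ * t^3)) =O[𝓝[>] (0:ℝ)] fun t => t^5)
    (hBasym : (fun t => B₁ t - b₀) =O[𝓝[>] (0:ℝ)] fun t => t^4)
    (hu : AnalyticOn ℝ u (Set.Ico 0 ε)) (hv : AnalyticOn ℝ v (Set.Ico 0 ε))
    (hx : ∀ t ∈ Set.Ioo 0 ε, HasDerivAt (fun s => x₁ * s + s^3 * u s)
      ((-deriv A₁ t / A₁ t + 1 / A₁ t - A₁ t / (B₁ t)^2) * (x₁ * t + t^3 * u t)
        + (t^2 * v t)^2 - (x₁ * t + t^3 * u t)^2) t)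
    (hy : ∀ t ∈ Set.Ioo 0 ε, HasDerivAt (fun s => s^2 * v s)
      ((-deriv B₁ t / B₁ t - 2 / A₁ t + 2 * (x₁ * t + t^3 * u t)) * (t^2 * v t)) t) :
    u 0 = -x₁^2/2 - x₁ * (4*a₃ + 1/(4*b₀^2)) ∧ v 0 = 0 := by
  have hIoo : Set.Ioo 0 ε ∈ 𝓝[>] (0 : ℝ) := Ioo_mem_nhdsGT hε
  have hu0 : Tendsto u (𝓝[>] 0) (𝓝 (u 0)) :=
    (hu.continuousOn 0 ⟨le_rfl, hε⟩).mono_of_mem_nhdsWithin (Ico_mem_nhdsGT hε)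
  have hv0 : Tendsto v (𝓝[>] 0) (𝓝 (v 0)) :=
    (hv.continuousOn 0 ⟨le_rfl, hε⟩).mono_of_mem_nhdsWithin (Ico_mem_nhdsGT hε)
  have hB0 : Tendsto B₁ (𝓝[>] 0) (𝓝 b₀) :=
    tendsto_sub_nhds_zero_iff.mp (hBasym.trans_tendsto (tendsto_pow_nhdsGT_zero four_ne_zero))
  have hx0 : Tendsto (fun t => x₁ * t + t ^ 3 * u t) (𝓝[>] 0) (𝓝 0) := by
    simpa using ((tendsto_pow_nhdsGT_zero one_ne_zero).const_mul x₁).add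
      ((tendsto_pow_nhdsGT_zero three_ne_zero).mul hu0)
  exact ⟨u_zero_eq_of_hasDerivAt hb₀.ne' (hA.differentiable (by simp)) hAasym hB0 hu0 hv0
      (fun _ => rfl) (eventually_of_mem hIoo hx),
    v_zero_eq_zero_of_hasDerivAt hb₀.ne' (hB.differentiable (by simp))
      (tendsto_div_id_of_isBigO_sub hAasym) hB0 hx0 hv0 (fun _ => rfl)
      (eventually_of_mem hIoo hy)⟩
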